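/- arXiv:2301.13157 — 4 statements merged into one kernel-verified Lean document; each statement's English description precedes it below -/
import Mathlib

section
/- Call a function h : ℕ⁺ → ℤ of Lefschetz type if there exist finitely many complex numbers α and integers m_α with h(k) = ∑_α m_α α^k for all k ≥ 1. A periodic function h : ℕ⁺ → ℤ of period n is of Lefschetz type if and only if for every i with 1 ≤ i ≤ n, the number (∑_{j=1}^{n} h(j) ζ_n^{-ij})/n is an integer, where ζ_n is a primitive n-th root of unity. -/
private lemma geom_icc {n : ℕ} (hn : 1 ≤ n) {x : ℂ} (hx : x ^ n = 1) :
    ∑ i ∈ Finset.Icc 1 n, x ^ i = if x = 1 then (n : ℂ) else 0 := by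
  split_ifs with h1
  · subst h1; simp [Nat.card_Icc]
  · have hr : ∑ i ∈ Finset.range n, x ^ i = 0 := by
      rw [geom_sum_eq h1, hx]; simp
    have key : ∑ i ∈ Finset.Icc 1 n, x ^ i = x * ∑ i ∈ Finset.range n, x ^ i := by
      rw [Finset.mul_sum, ← Finset.Ico_add_one_right_eq_Icc, Finset.sum_Ico_eq_sum_range]
      refine Finset.sum_congr (by rw [Nat.add_sub_cancel]) fun i _ => by rw [pow_add, pow_one]
    rw [key, hr, mul_zero]

private lemma eq_of_mod {n a b : ℕ} (h : a % n = b % n) (ha : 1 ≤ a) (ha' : a ≤ n)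
    (hb : 1 ≤ b) (hb' : b ≤ n) : a = b := by
  rcases eq_or_lt_of_le ha' with rfl | ha'
  · rcases eq_or_lt_of_le hb' with rfl | hb'
    · rfl
    · rw [Nat.mod_self, Nat.mod_eq_of_lt hb'] at h; omega
  · rw [Nat.mod_eq_of_lt ha'] at h
    rcases eq_or_lt_of_le hb' with rfl | hb'
    · rw [Nat.mod_self] at h; omega
    · rw [Nat.mod_eq_of_lt hb'] at h; exact h

private lemma aux_inner_sum {n : ℕ} (hn : 1 ≤ n) {ζ : ℂ} (hζ : IsPrimitiveRoot ζ n) (a b : ℕ) :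
    ∑ j ∈ Finset.Icc 1 n, (ζ ^ a * (ζ⁻¹) ^ b) ^ j = if a % n = b % n then (n : ℂ) else 0 := by
  have hζ0 : ζ ≠ 0 := hζ.ne_zero (by omega)
  have hζn : ζ ^ n = 1 := hζ.pow_eq_one
  have hx : (ζ ^ a * ζ⁻¹ ^ b) ^ n = 1 := by
    rw [mul_pow, ← pow_mul, ← pow_mul, mul_comm a n, mul_comm b n, pow_mul, pow_mul,
      inv_pow, hζn, inv_one, one_pow, one_pow, one_mul]
  rw [geom_icc hn hx]
  have hcond : ζ ^ a * ζ⁻¹ ^ b = 1 ↔ a % n = b % n := by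
    rw [inv_pow, mul_inv_eq_one₀ (pow_ne_zero _ hζ0)]
    constructor
    · intro hab
      have h1 : ζ ^ (a % n) = ζ ^ (b % n) := by
        rw [← pow_eq_pow_mod a hζn, ← pow_eq_pow_mod b hζn]; exact hab
      exact hζ.pow_inj (Nat.mod_lt _ (by omega)) (Nat.mod_lt _ (by omega)) h1
    · intro hab
      rw [pow_eq_pow_mod a hζn, pow_eq_pow_mod b hζn, hab]
  simp only [hcond]

private lemma hper_gen (h : ℕ → ℤ) (n : ℕ) (hper : ∀ k : ℕ, h (k + n) = h k) :
    ∀ t a, h (a + t * n) = h a := by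
  intro t
  induction t with
  | zero => simp
  | succ t ih =>
    intro a
    rw [Nat.succ_mul, ← Nat.add_assoc, hper, ih]

/-- A periodic function `h : ℕ⁺ → ℤ` of period `n` is of Lefschetz type (i.e., of the form
`h(k) = ∑_{i=1}^{n} m_i ζ_n^{ik}` with `m_i ∈ ℤ`) if and only if for every `1 ≤ i ≤ n` the
number `(∑_{j=1}^{n} h(j) ζ_n^{-ij}) / n` is an integer. -/
theorem periodic_lefschetz_iff (n : ℕ) (hn : 1 ≤ n) (ζ : ℂ) (hζ : IsPrimitiveRoot ζ n)
    (h : ℕ → ℤ) (hper : ∀ k : ℕ, h (k + n) = h k) :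
    (∃ m : ℕ → ℤ, ∀ k : ℕ, 1 ≤ k →
        (h k : ℂ) = ∑ i ∈ Finset.Icc 1 n, (m i : ℂ) * ζ ^ (i * k)) ↔
    (∀ i ∈ Finset.Icc 1 n, ∃ z : ℤ,
        (∑ j ∈ Finset.Icc 1 n, (h j : ℂ) * (ζ⁻¹) ^ (i * j)) = (n : ℂ) * z) := by
  have hn0 : (n : ℂ) ≠ 0 := Nat.cast_ne_zero.mpr (by omega)
  constructor
  · rintro ⟨m, hm⟩ i hi
    obtain ⟨hi1, hi2⟩ := Finset.mem_Icc.mp hi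
    refine ⟨m i, ?_⟩
    calc ∑ j ∈ Finset.Icc 1 n, (h j : ℂ) * (ζ⁻¹) ^ (i * j)
        = ∑ j ∈ Finset.Icc 1 n, ∑ l ∈ Finset.Icc 1 n, (m l : ℂ) * (ζ ^ l * ζ⁻¹ ^ i) ^ j := by
          refine Finset.sum_congr rfl fun j hj => ?_
          obtain ⟨hj1, hj2⟩ := Finset.mem_Icc.mp hj
          rw [hm j hj1, Finset.sum_mul]
          refine Finset.sum_congr rfl fun l hl => ?_
          rw [mul_pow, ← pow_mul, ← pow_mul, mul_assoc]
      _ = ∑ l ∈ Finset.Icc 1 n, (m l : ℂ) * ∑ j ∈ Finset.Icc 1 n, (ζ ^ l * ζ⁻¹ ^ i) ^ j := by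
          rw [Finset.sum_comm]
          exact Finset.sum_congr rfl fun l _ => (Finset.mul_sum _ _ _).symm
      _ = ∑ l ∈ Finset.Icc 1 n, (if l = i then (n : ℂ) * (m i : ℂ) else 0) := by
          refine Finset.sum_congr rfl fun l hl => ?_
          obtain ⟨hl1, hl2⟩ := Finset.mem_Icc.mp hl
          rw [aux_inner_sum hn hζ l i]
          by_cases hli : l = i
          · subst hli; simp [mul_comm]
          · rw [if_neg hli, if_neg (fun hc => hli (eq_of_mod hc hl1 hl2 hi1 hi2)), mul_zero]
      _ = (n : ℂ) * (m i : ℂ) := by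
          rw [Finset.sum_ite_eq' _ i, if_pos hi]
  · intro H
    refine ⟨fun i => if hi : i ∈ Finset.Icc 1 n then (H i hi).choose else 0, fun k hk => ?_⟩
    set j₀ : ℕ := if k % n = 0 then n else k % n with hj₀def
    have hj₀mem : j₀ ∈ Finset.Icc 1 n := by
      rw [hj₀def]; split_ifs with hc
      · exact Finset.mem_Icc.mpr ⟨hn, le_refl n⟩
      · exact Finset.mem_Icc.mpr ⟨by omega, le_of_lt (Nat.mod_lt _ (by omega))⟩
    obtain ⟨hj₀1, hj₀2⟩ := Finset.mem_Icc.mp hj₀mem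
    have hj₀mod : j₀ % n = k % n := by
      rw [hj₀def]; split_ifs with hc
      · rw [Nat.mod_self, hc]
      · exact Nat.mod_mod_of_dvd _ dvd_rfl
    have hhk : h j₀ = h k := by
      have hle : j₀ ≤ k := by
        rw [hj₀def]; split_ifs with hc
        · exact Nat.le_of_dvd (by omega) (Nat.dvd_of_mod_eq_zero hc)
        · exact Nat.mod_le _ _
      have hd : n ∣ (k - j₀) := (Nat.modEq_iff_dvd' hle).mp hj₀mod
      obtain ⟨t, ht⟩ := hd
      have hk' : k = j₀ + t * n := by rw [mul_comm t n, ← ht]; omega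
      rw [hk', hper_gen h n hper t j₀]
    apply mul_left_cancel₀ hn0
    symm
    calc (n : ℂ) * ∑ i ∈ Finset.Icc 1 n,
          ((if hi : i ∈ Finset.Icc 1 n then (H i hi).choose else 0 : ℤ) : ℂ) * ζ ^ (i * k)
        = ∑ i ∈ Finset.Icc 1 n,
            (∑ j ∈ Finset.Icc 1 n, (h j : ℂ) * (ζ⁻¹) ^ (i * j)) * ζ ^ (i * k) := by
          rw [Finset.mul_sum]
          refine Finset.sum_congr rfl fun i hi => ?_
          rw [dif_pos hi, ← mul_assoc, ← (H i hi).choose_spec]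
      _ = ∑ j ∈ Finset.Icc 1 n, (h j : ℂ) * ∑ i ∈ Finset.Icc 1 n, (ζ ^ k * ζ⁻¹ ^ j) ^ i := by
          simp only [Finset.sum_mul, Finset.mul_sum]
          rw [Finset.sum_comm]
          refine Finset.sum_congr rfl fun j _ => Finset.sum_congr rfl fun i _ => ?_
          rw [mul_pow, ← pow_mul, ← pow_mul, mul_comm k i, mul_comm j i]
          ring
      _ = ∑ j ∈ Finset.Icc 1 n, (if j = j₀ then (n : ℂ) * (h k : ℂ) else 0) := by
          refine Finset.sum_congr rfl fun j hj => ?_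
          obtain ⟨hj1, hj2⟩ := Finset.mem_Icc.mp hj
          rw [aux_inner_sum hn hζ k j]
          by_cases hjj : j = j₀
          · subst hjj
            rw [if_pos hj₀mod.symm, if_pos rfl, ← hhk]
            push_cast
            ring
          · rw [if_neg hjj, if_neg, mul_zero]
            intro hc
            exact hjj (eq_of_mod (by rw [← hc, hj₀mod]) hj1 hj2 hj₀1 hj₀2)
      _ = (n : ℂ) * (h k : ℂ) := by
          rw [Finset.sum_ite_eq' _ j₀, if_pos hj₀mem]
end

section
/- Let A be a finite set and τ a cyclic permutation of A (a single cycle of length |A|). Write |A| = 2^a · l with l odd and a ≥ 0. Define β(k) = 0 if τ^k has an orbit of even length on A, and β(k) = 2^{O(τ^k|A) - 1} otherwise, where O(τ^k|A) is the number of orbits of τ^k on A. Then for a ≥ 1 one has β(k) = 2^{2^a gcd(l,k) - 1} if 2^a | k and β(k) = 0 otherwise. -/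
open scoped Classical

/-- Let `τ` be a cyclic permutation of a set of cardinality `N = 2^a · l` with `l` odd and
`a ≥ 1`.  The orbits of `τ^k` all have length `N / gcd(N,k)` and there are `gcd(N,k)` of
them.  Define `β(k) = 2^{O(τ^k)-1}` if all orbits of `τ^k` have odd length and `β(k) = 0`
otherwise.  Then `β(k) = 2^{2^a·gcd(l,k) - 1}` if `2^a ∣ k`, and `β(k) = 0` otherwise. -/
theorem beta_cycle_formula (a l k : ℕ) (hl : Odd l) (ha : 1 ≤ a) (hk : 1 ≤ k) :
    (if Odd ((2 ^ a * l) / Nat.gcd (2 ^ a * l) k)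
      then 2 ^ (Nat.gcd (2 ^ a * l) k - 1) else (0 : ℕ)) =
    (if 2 ^ a ∣ k then 2 ^ (2 ^ a * Nat.gcd l k - 1) else 0) := by
  have hl0 : 0 < l := hl.pos
  have hcop : Nat.Coprime l (2 ^ a) :=
    (Nat.coprime_two_right.mpr hl).pow_right a
  by_cases h : 2 ^ a ∣ k
  · obtain ⟨m, rfl⟩ := h
    have hg : Nat.gcd (2 ^ a * l) (2 ^ a * m) = 2 ^ a * Nat.gcd l m :=
      Nat.gcd_mul_left _ _ _
    have hlk : Nat.gcd l (2 ^ a * m) = Nat.gcd l m :=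
      Nat.Coprime.gcd_mul_left_cancel_right m hcop.symm
    have hgl : Nat.gcd l m ∣ l := Nat.gcd_dvd_left _ _
    have hdiv : (2 ^ a * l) / (2 ^ a * Nat.gcd l m) = l / Nat.gcd l m := by
      exact Nat.mul_div_mul_left _ _ (by positivity)
    have hodd : Odd ((2 ^ a * l) / (2 ^ a * Nat.gcd l m)) := by
      rw [hdiv]
      rcases Nat.even_or_odd (l / Nat.gcd l m) with he | ho
      · exact absurd ((even_iff_two_dvd.mp he).trans (Nat.div_dvd_of_dvd hgl))
          (by simpa [even_iff_two_dvd] using Nat.not_even_iff_odd.mpr hl)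
      · exact ho
    simp [hg, hlk, hodd]
  · have hnodd : ¬ Odd ((2 ^ a * l) / Nat.gcd (2 ^ a * l) k) := by
      intro hodd
      apply h
      set d := Nat.gcd (2 ^ a * l) k with hd
      have hdpos : 0 < d := Nat.gcd_pos_of_pos_right _ hk
      have hdN : d ∣ 2 ^ a * l := Nat.gcd_dvd_left _ _
      have hNd : d * ((2 ^ a * l) / d) = 2 ^ a * l := Nat.mul_div_cancel' hdN
      have h2d : 2 ^ a ∣ d := by
        have hcop2 : Nat.Coprime (2 ^ a) ((2 ^ a * l) / d) :=
          (Nat.coprime_two_left.mpr hodd).pow_left a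
        refine hcop2.dvd_of_dvd_mul_right ?_
        rw [hNd]
        exact Dvd.intro l rfl
      exact h2d.trans (Nat.gcd_dvd_right _ _)
    simp [hnodd, h]
end

section
/- Let n be an odd positive integer and ζ_n a primitive n-th root of unity. For every integer i, the complex number ∑_{j=1}^{n} 2^{gcd(n,j)-1} ζ_n^{-ij} equals ∑_{d | n} 2^{d-1} c_{n/d}(i), where c_m(i) is the Ramanujan sum; moreover this number is an even integer plus (n-1)c_n(i), hence n·c_n(i) - ∑_{j=1}^n 2^{gcd(n,j)-1} ζ_n^{-ij} is divisible by 2n. -/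
/-!
Write `f = h ⋆ 1` with `h = f ⋆ μ`. Swapping sums, `∑_j f(gcd(n,j)) ξ^{ij}` becomes
`∑_{e ∣ n} h(e) ∑_{e ∣ j} ξ^{ij} = (h ⋆ G)(n)`, where `G(m) = m` if `m ∣ i` and `0` otherwise;
as `c_·(i) = μ ⋆ G`, this is `(f ⋆ c_·(i))(n)`.

For `f = a^·` the same associativity gives `(F ⋆ G)(n)` with `F = a^· ⋆ μ`. Gauss's congruence
`e ∣ F(e)` (from `a^{p^k} ≡ a^{p^{k-1}} mod p^k`) and `m ∣ G(m)` make every term of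
`(F ⋆ G)(n)` divisible by `n`. Hence for odd `n`, `n ∣ ∑_{d ∣ n} 2^{d-1} c_{n/d}(i)`, while
modulo `2` only the term `d = 1` survives, so this sum is `≡ c_n(i) ≡ n c_n(i)`; the two
congruences combine modulo `2n`.
-/

/-- Ramanujan's sum `c_n(i) = ∑_{d ∣ gcd(n,i)} μ(n/d) · d`. -/
def ramanujanSum (n i : ℕ) : ℤ :=
  ∑ d ∈ (Nat.gcd n i).divisors, (ArithmeticFunction.moebius (n / d)) * d

section

open Finset ArithmeticFunction
open scoped ArithmeticFunction.Moebius

def idOnDivisors (i : ℕ) : ArithmeticFunction ℤ :=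
  ⟨fun m => if m ∣ i then m else 0, by simp⟩

@[simp]
theorem idOnDivisors_apply (i m : ℕ) : idOnDivisors i m = if m ∣ i then (m : ℤ) else 0 := rfl

theorem moebius_mul_idOnDivisors_apply (i m : ℕ) :
    (μ * idOnDivisors i) m = ramanujanSum m i := by
  rcases eq_or_ne m 0 with rfl | hm
  · simp [ramanujanSum]
  rw [mul_apply, Nat.sum_divisorsAntidiagonal' (fun a b => μ a * idOnDivisors i b),
    ramanujanSum, ← Nat.divisors_filter_dvd_of_dvd hm (Nat.gcd_dvd_left m i)]
  simp only [idOnDivisors_apply, mul_ite, mul_zero, ← sum_filter, Nat.dvd_gcd_iff]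
  refine sum_congr ?_ fun _ _ => rfl
  ext d
  simp only [mem_filter, Nat.mem_divisors]
  tauto

theorem IsPrimitiveRoot.sum_Icc_pow_mul {R : Type*} [CommRing R] [IsDomain R] {ω : R} {m : ℕ}
    (hω : IsPrimitiveRoot ω m) (i : ℕ) :
    ∑ l ∈ Icc 1 m, ω ^ (i * l) = idOnDivisors i m := by
  simp only [pow_mul, idOnDivisors_apply]
  split_ifs with hmi
  · simp [(hω.pow_eq_one_iff_dvd i).2 hmi]
  · have hne : ω ^ i - 1 ≠ 0 := sub_ne_zero.2 fun h => hmi ((hω.pow_eq_one_iff_dvd i).1 h)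
    have hgeom := geom_sum_Ico_mul (ω ^ i) (Nat.le_add_left 1 m)
    rw [pow_succ, ← pow_mul, mul_comm i, pow_mul, hω.pow_eq_one, one_pow, one_mul, pow_one,
      sub_self, Finset.Ico_add_one_right_eq_Icc] at hgeom
    simpa [hne] using hgeom

theorem Nat.filter_dvd_Icc_eq_map {e n : ℕ} (he : 0 < e) (hen : e ∣ n) :
    {j ∈ Icc 1 n | e ∣ j} = (Icc 1 (n / e)).map ⟨(e * ·), mul_right_injective₀ he.ne'⟩ := by
  ext j
  simp only [mem_filter, mem_Icc, mem_map, Function.Embedding.coeFn_mk]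
  constructor
  · rintro ⟨⟨hj1, hjn⟩, l, rfl⟩
    exact ⟨l, ⟨Nat.pos_of_mul_pos_left hj1, (Nat.le_div_iff_mul_le he).2 (by linarith)⟩, rfl⟩
  · rintro ⟨l, ⟨hl1, hln⟩, rfl⟩
    refine ⟨⟨Nat.mul_pos he hl1, ?_⟩, dvd_mul_right e l⟩
    calc e * l ≤ e * (n / e) := Nat.mul_le_mul_left e hln
      _ = n := Nat.mul_div_cancel' hen

theorem IsPrimitiveRoot.sum_Icc_filter_dvd_pow_mul {R : Type*} [CommRing R] [IsDomain R]
    {ξ : R} {n e : ℕ} (hξ : IsPrimitiveRoot ξ n) (hn : 0 < n) (hen : e ∣ n) (i : ℕ) :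
    ∑ j ∈ Icc 1 n with e ∣ j, ξ ^ (i * j) = idOnDivisors i (n / e) := by
  have he : 0 < e := Nat.pos_of_dvd_of_pos hen hn
  rw [Nat.filter_dvd_Icc_eq_map he hen, sum_map,
    ← (hξ.pow hn (Nat.mul_div_cancel' hen).symm).sum_Icc_pow_mul]
  refine sum_congr rfl fun l _ => ?_
  simp only [Function.Embedding.coeFn_mk, ← pow_mul]
  ring_nf

theorem IsPrimitiveRoot.sum_Icc_gcd_mul_pow_eq_sum_ramanujanSum {R : Type*} [CommRing R]
    [IsDomain R] {ξ : R} {n : ℕ} (hξ : IsPrimitiveRoot ξ n) (f : ℕ → R) (i : ℕ) :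
    ∑ j ∈ Icc 1 n, f (n.gcd j) * ξ ^ (i * j) =
      ∑ d ∈ n.divisors, f d * (ramanujanSum (n / d) i : R) := by
  rcases n.eq_zero_or_pos with rfl | hn
  · simp
  set h : ArithmeticFunction R := toArithmeticFunction f * μ
  have hf : ∀ g ≠ 0, f g = ∑ e ∈ g.divisors, h e := fun g hg => by
    rw [← coe_mul_zeta_apply, mul_assoc, coe_moebius_mul_coe_zeta, mul_one]
    simp [toArithmeticFunction, hg]
  calc ∑ j ∈ Icc 1 n, f (n.gcd j) * ξ ^ (i * j)
      = ∑ j ∈ Icc 1 n, ∑ e ∈ (n.gcd j).divisors, h e * ξ ^ (i * j) := by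
        refine sum_congr rfl fun j _ => ?_
        rw [hf _ (Nat.gcd_pos_of_pos_left j hn).ne', sum_mul]
    _ = ∑ e ∈ n.divisors, ∑ j ∈ Icc 1 n with e ∣ j, h e * ξ ^ (i * j) := by
        refine sum_comm' fun j e => ?_
        simp only [Nat.mem_divisors, Nat.dvd_gcd_iff, mem_filter, ne_eq,
          Nat.gcd_eq_zero_iff, hn.ne', false_and, not_false_eq_true, and_true]
        tauto
    _ = ∑ e ∈ n.divisors, h e * idOnDivisors i (n / e) := by
        refine sum_congr rfl fun e he => ?_
        rw [← mul_sum, hξ.sum_Icc_filter_dvd_pow_mul hn (Nat.dvd_of_mem_divisors he)]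
    _ = (toArithmeticFunction f * ↑(μ * idOnDivisors i)) n := by
        rw [intCoe_mul, ← mul_assoc, mul_apply,
          Nat.sum_divisorsAntidiagonal
            (fun a b => h a * (idOnDivisors i : ArithmeticFunction R) b)]
        simp [intCoe_apply]
    _ = ∑ d ∈ n.divisors, f d * (ramanujanSum (n / d) i : R) := by
        rw [mul_apply, Nat.sum_divisorsAntidiagonal (fun a b => toArithmeticFunction f a *
          (↑(μ * idOnDivisors i) : ArithmeticFunction R) b)]
        refine sum_congr rfl fun d hd => ?_
        rw [intCoe_apply, moebius_mul_idOnDivisors_apply]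
        simp [toArithmeticFunction, (Nat.pos_of_mem_divisors hd).ne']

theorem ArithmeticFunction.natCast_dvd_mul_apply {R : Type*} [CommSemiring R]
    {f g : ArithmeticFunction R} (hf : ∀ m : ℕ, (m : R) ∣ f m) (hg : ∀ m : ℕ, (m : R) ∣ g m)
    (n : ℕ) : (n : R) ∣ (f * g) n := by
  rw [mul_apply]
  refine dvd_sum fun x hx => ?_
  rw [← (Nat.mem_divisorsAntidiagonal.1 hx).1, Nat.cast_mul]
  exact mul_dvd_mul (hf x.1) (hg x.2)

theorem Int.prime_pow_succ_dvd_pow_mul_sub_pow {p k t : ℕ} (hp : p.Prime) (hkt : p ^ k ∣ t)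
    (a : ℤ) : (p : ℤ) ^ (k + 1) ∣ a ^ (p * t) - a ^ t := by
  obtain ⟨s, rfl⟩ := hkt
  have h := dvd_sub_pow_of_dvd_sub (Int.prime_dvd_pow_self_sub hp (a ^ s)) k
  rw [← pow_mul, ← pow_mul, ← pow_mul] at h
  rwa [show p * (p ^ k * s) = s * (p * p ^ k) by ring, mul_comm (p ^ k) s]

theorem Nat.Prime.sum_divisors_moebius_mul_eq_sum_not_dvd {R : Type*} [CommRing R] {p e : ℕ}
    (hp : p.Prime) (hpe : p ∣ e) (x : ℕ → R) :
    ∑ d ∈ e.divisors, (μ d : R) * x (e / d) =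
      ∑ d ∈ e.divisors with ¬p ∣ d, (μ d : R) * (x (e / d) - x (e / (p * d))) := by
  rcases eq_or_ne e 0 with rfl | he
  · simp
  have hmoebius : ∀ d, ¬p ∣ d → (μ (p * d) : R) = -μ d := fun d hpd => by
    rw [isMultiplicative_moebius.map_mul_of_coprime ((hp.coprime_iff_not_dvd).2 hpd),
      moebius_apply_prime hp]
    push_cast
    ring
  have hsub : image (p * ·) {d ∈ e.divisors | ¬p ∣ d} ⊆ {d ∈ e.divisors | p ∣ d} := by
    simp only [subset_iff, mem_image, mem_filter, Nat.mem_divisors]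
    rintro _ ⟨d, ⟨⟨hde, -⟩, hpd⟩, rfl⟩
    exact ⟨⟨((hp.coprime_iff_not_dvd).2 hpd).mul_dvd_of_dvd_of_dvd hpe hde, he⟩,
      dvd_mul_right p d⟩
  have hzero : ∀ d ∈ {d ∈ e.divisors | p ∣ d},
      d ∉ image (p * ·) {d ∈ e.divisors | ¬p ∣ d} → (μ d : R) * x (e / d) = 0 := by
    simp only [mem_image, mem_filter, Nat.mem_divisors, not_exists, not_and]
    rintro _ ⟨⟨hde, -⟩, d, rfl⟩ hnot
    have hpd : p ∣ d :=
      by_contra fun hpd => hnot d ⟨⟨(dvd_mul_left d p).trans hde, he⟩, hpd⟩ rfl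
    have hsq : ¬Squarefree (p * d) := fun hsq => hp.not_isUnit (hsq p (mul_dvd_mul_left p hpd))
    simp [moebius_eq_zero_of_not_squarefree hsq]
  rw [← sum_filter_not_add_sum_filter e.divisors (p ∣ ·), ← sum_subset hsub hzero,
    sum_image fun _ _ _ _ h => Nat.eq_of_mul_eq_mul_left hp.pos h, ← sum_add_distrib]
  refine sum_congr rfl fun d hd => ?_
  rw [hmoebius d (mem_filter.1 hd).2]
  ring

theorem prime_pow_dvd_sum_divisors_moebius_mul_pow {p k e : ℕ} (hp : p.Prime) (hpk : p ^ k ∣ e)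
    (a : ℤ) : (p : ℤ) ^ k ∣ ∑ d ∈ e.divisors, μ d * a ^ (e / d) := by
  rcases k with _ | k
  · simp
  have hpe : p ∣ e := (dvd_pow_self p k.succ_ne_zero).trans hpk
  have hsplit := hp.sum_divisors_moebius_mul_eq_sum_not_dvd (R := ℤ) hpe (a ^ ·)
  simp only [Int.cast_id] at hsplit
  rw [hsplit]
  refine dvd_sum fun d hd => Dvd.dvd.mul_left ?_ _
  have hd0 : 0 < d := Nat.pos_of_mem_divisors (mem_filter.1 hd).1
  obtain ⟨⟨hde, -⟩, hpd⟩ := by simpa only [mem_filter, Nat.mem_divisors] using hd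
  have hcop : p.Coprime d := (hp.coprime_iff_not_dvd).2 hpd
  obtain ⟨t, rfl⟩ : p * d ∣ e := hcop.mul_dvd_of_dvd_of_dvd hpe hde
  have hkt : p ^ k ∣ t := by
    rw [pow_succ', mul_assoc] at hpk
    exact (hcop.pow_left k).dvd_of_dvd_mul_left (Nat.dvd_of_mul_dvd_mul_left hp.pos hpk)
  rw [Nat.mul_div_cancel_left t (Nat.mul_pos hp.pos hd0), mul_right_comm,
    Nat.mul_div_cancel _ hd0]
  exact Int.prime_pow_succ_dvd_pow_mul_sub_pow hp hkt a

theorem dvd_sum_divisors_moebius_mul_pow (e : ℕ) (a : ℤ) :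
    (e : ℤ) ∣ ∑ d ∈ e.divisors, μ d * a ^ (e / d) := by
  rw [Int.natCast_dvd, Nat.dvd_iff_prime_pow_dvd_dvd]
  intro p k hp hpk
  rw [← Int.natCast_dvd, Nat.cast_pow]
  exact prime_pow_dvd_sum_divisors_moebius_mul_pow hp hpk a

theorem dvd_sum_divisors_pow_mul_ramanujanSum (a : ℤ) (n i : ℕ) :
    (n : ℤ) ∣ ∑ d ∈ n.divisors, a ^ d * ramanujanSum (n / d) i := by
  set P : ArithmeticFunction ℤ := toArithmeticFunction (a ^ ·)
  have hP : ∀ e : ℕ, (e : ℤ) ∣ (P * μ) e := fun e => by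
    rw [mul_apply, Nat.sum_divisorsAntidiagonal' (fun x y => P x * μ y)]
    convert dvd_sum_divisors_moebius_mul_pow e a using 1
    refine sum_congr rfl fun d hd => ?_
    simp [P, toArithmeticFunction, (Nat.pos_of_mem_divisors hd).ne', Nat.divisor_le hd, mul_comm]
  have hG : ∀ m : ℕ, (m : ℤ) ∣ idOnDivisors i m := fun m => by
    rw [idOnDivisors_apply]; split_ifs <;> simp
  suffices h : ∑ d ∈ n.divisors, a ^ d * ramanujanSum (n / d) i = (P * μ * idOnDivisors i) n by
    rw [h]; exact natCast_dvd_mul_apply hP hG n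
  rw [mul_assoc, mul_apply,
    Nat.sum_divisorsAntidiagonal (fun x y => P x * (μ * idOnDivisors i) y)]
  refine sum_congr rfl fun d hd => ?_
  rw [moebius_mul_idOnDivisors_apply]
  simp [P, toArithmeticFunction, (Nat.pos_of_mem_divisors hd).ne']

theorem sum_divisors_two_pow_pred_mul_modEq {n : ℕ} (hn : n ≠ 0) (f : ℕ → ℤ) :
    ∑ d ∈ n.divisors, 2 ^ (d - 1) * f d ≡ f 1 [ZMOD 2] := by
  rw [← add_sum_erase _ _ (Nat.one_mem_divisors.2 hn), Nat.sub_self, pow_zero, one_mul]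
  conv_rhs => rw [← add_zero (f 1)]
  refine Int.ModEq.add_left _ (Int.modEq_zero_iff_dvd.2 (dvd_sum fun d hd => ?_))
  obtain ⟨hd1, hd⟩ := mem_erase.1 hd
  exact (dvd_pow_self 2 (by have := Nat.pos_of_mem_divisors hd; omega)).mul_right _

end

theorem sum_two_pow_gcd_zeta_general (n : ℕ) (hodd : Odd n) (ζ : ℂ)
    (hζ : IsPrimitiveRoot ζ n) (i : ℕ) :
    (∑ j ∈ Finset.Icc 1 n, (2 : ℂ) ^ (Nat.gcd n j - 1) * (ζ⁻¹) ^ (i * j) =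
      ∑ d ∈ n.divisors, (2 : ℂ) ^ (d - 1) * (ramanujanSum (n / d) i : ℂ)) ∧
    (∃ z : ℤ, (n : ℂ) * (ramanujanSum n i : ℂ) -
        ∑ j ∈ Finset.Icc 1 n, (2 : ℂ) ^ (Nat.gcd n j - 1) * (ζ⁻¹) ^ (i * j) =
      (2 * n : ℂ) * (z : ℂ)) := by
  have hsum := hζ.inv.sum_Icc_gcd_mul_pow_eq_sum_ramanujanSum (fun d => (2 : ℂ) ^ (d - 1)) i
  refine ⟨hsum, ?_⟩
  set S : ℤ := ∑ d ∈ n.divisors, 2 ^ (d - 1) * ramanujanSum (n / d) i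
  have hcop : (2 : ℤ).natAbs.Coprime (n : ℤ).natAbs := by simpa using hodd
  have h2S : 2 * S = ∑ d ∈ n.divisors, 2 ^ d * ramanujanSum (n / d) i := by
    rw [Finset.mul_sum]
    refine Finset.sum_congr rfl fun d hd => ?_
    rw [← mul_assoc, ← pow_succ', Nat.sub_add_cancel (Nat.pos_of_mem_divisors hd)]
  have hSn : (n : ℤ) ∣ S :=
    (Int.isCoprime_iff_gcd_eq_one.2 hcop.symm).dvd_of_dvd_mul_left
      (h2S ▸ dvd_sum_divisors_pow_mul_ramanujanSum 2 n i)
  have hmod2 : S ≡ n * ramanujanSum n i [ZMOD 2] := by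
    have hn1 : (n : ℤ) ≡ 1 [ZMOD 2] := Int.odd_iff.1 (by exact_mod_cast hodd)
    refine (sum_divisors_two_pow_pred_mul_modEq hodd.pos.ne' _).trans ?_
    simpa using (hn1.mul_right (ramanujanSum n i)).symm
  have hmodn : S ≡ n * ramanujanSum n i [ZMOD n] :=
    (Int.modEq_zero_iff_dvd.2 hSn).trans (Int.modEq_zero_iff_dvd.2 (dvd_mul_right _ _)).symm
  obtain ⟨z, hz⟩ := ((Int.modEq_and_modEq_iff_modEq_mul hcop).1 ⟨hmod2, hmodn⟩).dvd
  refine ⟨z, ?_⟩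
  rw [hsum]
  exact_mod_cast hz

/-- For `n` odd and `ζ` a primitive `n`-th root of unity, the sum
`∑_{j=1}^{n} 2^{gcd(n,j)-1} ζ^{-ij}` equals `∑_{d ∣ n} 2^{d-1} c_{n/d}(i)`, and
`n·c_n(i) - ∑_{j=1}^{n} 2^{gcd(n,j)-1} ζ^{-ij}` is divisible by `2n`. -/
theorem sum_two_pow_gcd_zeta (n : ℕ) (hn : 0 < n) (hodd : Odd n) (ζ : ℂ)
    (hζ : IsPrimitiveRoot ζ n) (i : ℕ) :
    (∑ j ∈ Finset.Icc 1 n, (2 : ℂ) ^ (Nat.gcd n j - 1) * (ζ⁻¹) ^ (i * j) =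
      ∑ d ∈ n.divisors, (2 : ℂ) ^ (d - 1) * (ramanujanSum (n / d) i : ℂ)) ∧
    (∃ z : ℤ, (n : ℂ) * (ramanujanSum n i : ℂ) -
        ∑ j ∈ Finset.Icc 1 n, (2 : ℂ) ^ (Nat.gcd n j - 1) * (ζ⁻¹) ^ (i * j) =
      (2 * n : ℂ) * (z : ℂ)) :=
  sum_two_pow_gcd_zeta_general n hodd ζ hζ i
end

section
/- Define for a finite set A with permutation τ: α_A(k) = |A| if τ^k is a single cycle on A and 0 otherwise; β_A(k) = 2^{O(τ^k|A)-1} if all orbits of τ^k have odd length and 0 otherwise. Then ω_A := (α_A + (-1)^{|A|} β_A)/2 takes integer values for all k ≥ 1. -/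
open scoped Classical

/-- For a nonempty finite set `A` with a permutation `τ`, define
`α(k) = |A|` if `τ^k` is a single cycle (has exactly one orbit) and `0` otherwise, and
`β(k) = 2^{O(τ^k)-1}` if all orbits of `τ^k` have odd length and `0` otherwise, where
`O(τ^k)` is the number of orbits of `τ^k` on `A`.  Then
`ω := (α + (-1)^{|A|} β)/2` takes integer values, i.e. `2 ∣ α(k) + (-1)^{|A|} β(k)`. -/
theorem omega_integral (A : Type*) [Finite A] [Nonempty A] (τ : Equiv.Perm A)
    (k : ℕ) (hk : 1 ≤ k) :
    (2 : ℤ) ∣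
      ((if Nat.card (MulAction.orbitRel.Quotient (Subgroup.zpowers (τ ^ k)) A) = 1
          then (Nat.card A : ℤ) else 0) +
        (-1 : ℤ) ^ (Nat.card A) *
          (if ∀ a : A, Odd (Nat.card (MulAction.orbit (Subgroup.zpowers (τ ^ k)) a))
            then (2 : ℤ) ^
              (Nat.card (MulAction.orbitRel.Quotient (Subgroup.zpowers (τ ^ k)) A) - 1)
            else 0)) := by
  set G := Subgroup.zpowers (τ ^ k)
  by_cases h1 : Nat.card (MulAction.orbitRel.Quotient G A) = 1
  · -- single orbit: each orbit is the whole of A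
    have hsub : Subsingleton (MulAction.orbitRel.Quotient G A) :=
      Nat.card_eq_one_iff_unique.mp h1 |>.1
    have horb : ∀ a : A, Nat.card (MulAction.orbit G a) = Nat.card A := by
      intro a
      have : MulAction.orbit G a = Set.univ := by
        ext b
        simp only [Set.mem_univ, iff_true]
        have : (⟦b⟧ : MulAction.orbitRel.Quotient G A) = ⟦a⟧ := Subsingleton.elim _ _
        exact (MulAction.orbitRel_apply).mp (Quotient.eq.mp this)
      rw [this]
      simp [Nat.card_congr (Equiv.Set.univ A)]
    by_cases hodd : Odd (Nat.card A)
    · have hall : ∀ a : A, Odd (Nat.card (MulAction.orbit G a)) := by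
        intro a; rw [horb a]; exact hodd
      rw [if_pos h1, if_pos hall, h1]
      simp only [Nat.sub_self, pow_zero, mul_one]
      rw [Odd.neg_one_pow hodd]
      obtain ⟨m, hm⟩ := hodd
      exact ⟨m, by push_cast [hm]; ring⟩
    · have hnall : ¬ ∀ a : A, Odd (Nat.card (MulAction.orbit G a)) := by
        intro h
        obtain ⟨a⟩ := ‹Nonempty A›
        exact hodd (horb a ▸ h a)
      rw [if_pos h1, if_neg hnall, mul_zero, add_zero]
      rw [Nat.not_odd_iff_even] at hodd
      exact_mod_cast Int.natCast_dvd_natCast.mpr hodd.two_dvd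
  · -- more than one orbit
    rw [if_neg h1, zero_add]
    have : Nonempty (MulAction.orbitRel.Quotient G A) := ⟨⟦Classical.arbitrary A⟧⟩
    have hpos : 1 ≤ Nat.card (MulAction.orbitRel.Quotient G A) := Nat.card_pos
    have h2 : 2 ≤ Nat.card (MulAction.orbitRel.Quotient G A) := by omega
    by_cases hall : ∀ a : A, Odd (Nat.card (MulAction.orbit G a))
    · rw [if_pos hall]
      exact Dvd.dvd.mul_left (dvd_pow_self 2 (by omega : Nat.card (MulAction.orbitRel.Quotient G A) - 1 ≠ 0)) _
    · rw [if_neg hall, mul_zero]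
      exact dvd_zero 2
end
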